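/- Let R = (V, A) be a digraph and let (u,v) be an authorized arc of R (u ≠ v). Then (v,u) is an authorized arc of R, and moreover (v,u) remains an authorized arc of the digraph R′ = (V, A ∪ {(u,v)}) obtained by adding the arc (u,v) to R. -/

import Mathlib

/-! Common definitions: temporal (di)graphs, journeys, footprints,
closed walks, the walk-Helly property, tree representations, etc. -/

variable {V : Type*}

/-- Underlying undirected simple graph of a digraph given by its arc relation. -/
def underGraph (A : V → V → Prop) : SimpleGraph V where
  Adj u v := u ≠ v ∧ (A u v ∨ A v u)
  symm := ⟨fun _ _ h => ⟨h.1.symm, h.2.symm⟩⟩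
  loopless := ⟨fun _ h => h.1 rfl⟩

/-- Number of connected components of a digraph (components of the underlying graph). -/
noncomputable def numComponents (A : V → V → Prop) : ℕ :=
  Nat.card (underGraph A).ConnectedComponent

/-- A directed circuit: a closed directed walk whose vertices are pairwise
distinct except for the repeated endpoint. -/
def IsCircuit (A : V → V → Prop) (k : ℕ) (w : ℕ → V) : Prop :=
  1 ≤ k ∧ w k = w 0 ∧ (∀ i < k, A (w i) (w (i + 1))) ∧
    ∀ i < k, ∀ j < k, w i = w j → i = j

/-- A directed feedback vertex set: every circuit contains a vertex of `S`. -/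
def IsDFVS (A : V → V → Prop) (S : Set V) : Prop :=
  ∀ (k : ℕ) (w : ℕ → V), IsCircuit A k w → ∃ i < k, w i ∈ S

/-- A valid finite set of temporal arcs: distinct endpoints, positive times. -/
def ValidDiTemporal (E : Finset ((V × V) × ℕ)) : Prop :=
  ∀ e ∈ E, e.1.1 ≠ e.1.2 ∧ 1 ≤ e.2

/-- A (strict) journey from `u` to `v` in a temporal digraph with arc set `E`. -/
def DiJourney (E : Set ((V × V) × ℕ)) (u v : V) : Prop :=
  ∃ (k : ℕ) (w : ℕ → V) (t : ℕ → ℕ),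
    1 ≤ k ∧ w 0 = u ∧ w k = v ∧
    (∀ i < k, ((w i, w (i + 1)), t i) ∈ E) ∧
    (∀ i, i + 1 < k → t i < t (i + 1))

/-- Arcs of the reachability graph of a temporal digraph. -/
def reachArc (E : Set ((V × V) × ℕ)) (u v : V) : Prop :=
  u ≠ v ∧ DiJourney E u v

/-- Arcs of the (directed) footprint of a temporal digraph. -/
def footArc (E : Set ((V × V) × ℕ)) (u v : V) : Prop :=
  ∃ t, ((u, v), t) ∈ E

/-- A valid finite set of undirected temporal edges: non-loop edges, positive times. -/
def ValidTemporal (E : Finset (Sym2 V × ℕ)) : Prop :=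
  ∀ e ∈ E, ¬ e.1.IsDiag ∧ 1 ≤ e.2

/-- A (strict) journey from `u` to `v` in an undirected temporal graph with edge set `E`. -/
def Journey (E : Set (Sym2 V × ℕ)) (u v : V) : Prop :=
  ∃ (k : ℕ) (w : ℕ → V) (t : ℕ → ℕ),
    1 ≤ k ∧ w 0 = u ∧ w k = v ∧
    (∀ i < k, (s(w i, w (i + 1)), t i) ∈ E) ∧
    (∀ i, i + 1 < k → t i < t (i + 1))

/-- The temporal graph with edge set `E` satisfies the request graph `A`. -/
def Satisfies (E : Set (Sym2 V × ℕ)) (A : V → V → Prop) : Prop :=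
  ∀ u v : V, A u v → Journey E u v

/-- Footprint of an undirected temporal graph. -/
def footprint (E : Set (Sym2 V × ℕ)) : SimpleGraph V where
  Adj u v := u ≠ v ∧ ∃ t, (s(u, v), t) ∈ E
  symm := by
    constructor
    intro u v h
    obtain ⟨h1, t, ht⟩ := h
    exact ⟨h1.symm, t, by rwa [Sym2.eq_swap]⟩
  loopless := ⟨fun _ h => h.1 rfl⟩

/-- A tree solution for the request graph `A`: a valid temporal graph satisfying
all the requests and whose footprint is a tree on the whole vertex set. -/
def IsTreeSolution (E : Finset (Sym2 V × ℕ)) (A : V → V → Prop) : Prop :=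
  ValidTemporal E ∧ Satisfies (↑E : Set (Sym2 V × ℕ)) A ∧
    (footprint (↑E : Set (Sym2 V × ℕ))).IsTree

/-- A closed directed walk of length `k ≥ 1` in the digraph `A`. -/
def IsClosedWalk (A : V → V → Prop) (k : ℕ) (w : ℕ → V) : Prop :=
  1 ≤ k ∧ w k = w 0 ∧ ∀ i < k, A (w i) (w (i + 1))

/-- Vertex set of a walk of length `k`. -/
def walkSet (k : ℕ) (w : ℕ → V) : Set V := {x | ∃ i < k, w i = x}

/-- `S` is the vertex set of some closed walk of `A`. -/
def IsWalkSet (A : V → V → Prop) (S : Set V) : Prop :=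
  ∃ (k : ℕ) (w : ℕ → V), IsClosedWalk A k w ∧ S = walkSet k w

/-- The digraph `A` is walk-Helly: every (nonempty) family of vertex sets of
closed walks that pairwise intersect has a common vertex. -/
def WalkHelly (A : V → V → Prop) : Prop :=
  ∀ 𝒮 : Set (Set V), 𝒮.Nonempty → (∀ S ∈ 𝒮, IsWalkSet A S) →
    (∀ S ∈ 𝒮, ∀ S' ∈ 𝒮, (S ∩ S').Nonempty) → (⋂₀ 𝒮).Nonempty

/-- A tree representation of the digraph `A`: a tree on the vertex set such that the
vertex set of every closed walk of `A` induces a connected subgraph. -/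
def IsTreeRep (A : V → V → Prop) (T : SimpleGraph V) : Prop :=
  T.IsTree ∧ ∀ S : Set V, IsWalkSet A S → (T.induce S).Connected

/-- `(u, v)` is an authorized arc of `A`: there is no vertex `x` lying both on a
closed walk through `u` avoiding `v` and on a closed walk through `v` avoiding `u`. -/
def IsAuthorized (A : V → V → Prop) (u v : V) : Prop :=
  ¬ ∃ x : V, (∃ S, IsWalkSet A S ∧ u ∈ S ∧ x ∈ S ∧ v ∉ S) ∧
             (∃ S, IsWalkSet A S ∧ v ∈ S ∧ x ∈ S ∧ u ∉ S)

/-- The undirected graph of forced edges of `A` (pairs with arcs in both directions). -/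
def forcedGraph (A : V → V → Prop) : SimpleGraph V where
  Adj u v := u ≠ v ∧ A u v ∧ A v u
  symm := ⟨fun _ _ h => ⟨h.1.symm, h.2.2, h.2.1⟩⟩
  loopless := ⟨fun _ h => h.1 rfl⟩

/-! A closed walk only uses arcs between its own vertices, so a closed walk of `A ∪ {(u, v)}`
missing `u` or `v` is already a closed walk of `A`. Those are the only walks the definition of
an authorized arc `(u, v)` looks at, and that definition is symmetric in `u` and `v`. -/

def addArc (A : V → V → Prop) (a b : V) : V → V → Prop :=
  fun x y => A x y ∨ (x = a ∧ y = b)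

section

variable {A B : V → V → Prop}

theorem IsClosedWalk.succ_mem_walkSet {k : ℕ} {w : ℕ → V} (hw : IsClosedWalk A k w) {i : ℕ}
    (hi : i < k) : w (i + 1) ∈ walkSet k w := by
  rcases (show i + 1 ≤ k from hi).lt_or_eq with h | h
  · exact ⟨i + 1, h, rfl⟩
  · exact ⟨0, hw.1, by rw [h, hw.2.1]⟩

theorem IsWalkSet.mono_on {S : Set V} (hS : IsWalkSet A S)
    (hAB : ∀ x ∈ S, ∀ y ∈ S, A x y → B x y) : IsWalkSet B S := by
  obtain ⟨k, w, hw, rfl⟩ := hS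
  refine ⟨k, w, ⟨hw.1, hw.2.1, fun i hi => ?_⟩, rfl⟩
  exact hAB _ ⟨i, hi, rfl⟩ _ (hw.succ_mem_walkSet hi) (hw.2.2 i hi)

theorem IsWalkSet.of_addArc {a b : V} {S : Set V} (hS : IsWalkSet (addArc A a b) S)
    (hab : a ∉ S ∨ b ∉ S) : IsWalkSet A S :=
  hS.mono_on fun _ hx _ hy hxy =>
    hxy.resolve_right fun ⟨hxa, hyb⟩ => hab.elim (· (hxa ▸ hx)) (· (hyb ▸ hy))

theorem IsAuthorized.symm {u v : V} (h : IsAuthorized A u v) : IsAuthorized A v u :=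
  fun ⟨x, hu, hv⟩ => h ⟨x, hv, hu⟩

theorem IsAuthorized.of_isWalkSet {u v : V} (h : IsAuthorized A u v)
    (hBA : ∀ S, IsWalkSet B S → u ∉ S ∨ v ∉ S → IsWalkSet A S) : IsAuthorized B u v :=
  fun ⟨x, ⟨S, hS, huS, hxS, hvS⟩, ⟨T, hT, hvT, hxT, huT⟩⟩ =>
    h ⟨x, ⟨S, hBA S hS (.inr hvS), huS, hxS, hvS⟩, ⟨T, hBA T hT (.inl huT), hvT, hxT, huT⟩⟩

theorem IsAuthorized.addArc {u v : V} (h : IsAuthorized A u v) :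
    IsAuthorized (addArc A u v) u v :=
  h.of_isWalkSet fun _ hS huv => hS.of_addArc huv

end

theorem stmt10_general {V : Type*} (A : V → V → Prop)
    (u v : V) (hauth : IsAuthorized A u v) :
    IsAuthorized A v u ∧
      IsAuthorized (fun a b => A a b ∨ (a = u ∧ b = v)) v u :=
  ⟨hauth.symm, hauth.addArc.symm⟩

/-- if `(u, v)` is an authorized arc of `A`, then so is `(v, u)`, and
`(v, u)` remains authorized after adding the arc `(u, v)` to `A`. -/
theorem stmt10 {V : Type*} [Fintype V] (A : V → V → Prop)
    (u v : V) (huv : u ≠ v) (hauth : IsAuthorized A u v) :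
    IsAuthorized A v u ∧
      IsAuthorized (fun a b => A a b ∨ (a = u ∧ b = v)) v u :=
  stmt10_general A u v hauth
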